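/- Suppose M > L_g‖L_p‖ and (x_k)_{k≥0} is a RHOTA sequence. Then Σ_{k=0}^{∞} ‖x_{k+1} − x_k‖^{p+1} ≤ (p+1)!(f(x_0) − f^*)/(M − L_g‖L_p‖) < ∞, hence ‖x_{k+1} − x_k‖ → 0 as k → ∞, and for every k ≥ 0 one has min_{j=0,…,k} ‖x_{j+1} − x_j‖^{p+1} ≤ (f(x_0) − f^*)(p+1)!/((M − L_g‖L_p‖)(k+1)). -/

import Mathlib

open scoped BigOperators RealInnerProductSpace

noncomputable section

/-- The vector `(F_1(x), …, F_m(x)) ∈ ℝ^m` (with the Euclidean norm). -/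
def euclMap {n m : ℕ} (F : Fin m → EuclideanSpace ℝ (Fin n) → ℝ)
    (x : EuclideanSpace ℝ (Fin n)) : EuclideanSpace ℝ (Fin m) :=
  (EuclideanSpace.equiv (Fin m) ℝ).symm fun i => F i x

/-- The vector `T_p^F(y; x)` of `p`-th order Taylor approximations of the components
`F_i` around the center `x`, evaluated at `y`. -/
def taylorMap (p : ℕ) {n m : ℕ} (F : Fin m → EuclideanSpace ℝ (Fin n) → ℝ)
    (y x : EuclideanSpace ℝ (Fin n)) : EuclideanSpace ℝ (Fin m) :=
  (EuclideanSpace.equiv (Fin m) ℝ).symm fun i =>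
    ∑ j ∈ Finset.range (p + 1),
      (1 / (Nat.factorial j : ℝ)) * iteratedFDeriv ℝ j (F i) x (fun _ => y - x)

/-- The composite objective `f(x) = g(F(x)) + h(x)`. -/
def fObj {n m : ℕ} (F : Fin m → EuclideanSpace ℝ (Fin n) → ℝ)
    (g : EuclideanSpace ℝ (Fin m) → ℝ) (h : EuclideanSpace ℝ (Fin n) → ℝ)
    (x : EuclideanSpace ℝ (Fin n)) : ℝ :=
  g (euclMap F x) + h x

/-- The regularized higher-order Taylor model
`s_M(y; x̄) = g(T_p^F(y; x̄)) + (M/(p+1)!)‖y − x̄‖^{p+1} + h(y)`. -/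
def sModel (p : ℕ) {n m : ℕ} (F : Fin m → EuclideanSpace ℝ (Fin n) → ℝ)
    (g : EuclideanSpace ℝ (Fin m) → ℝ) (h : EuclideanSpace ℝ (Fin n) → ℝ) (M : ℝ)
    (y xb : EuclideanSpace ℝ (Fin n)) : ℝ :=
  g (taylorMap p F y xb) + M / (Nat.factorial (p + 1) : ℝ) * ‖y - xb‖ ^ (p + 1) + h y

/-!
The Lipschitz bound on `D^p F_i` gives `|F_i(y) - T_p^{F_i}(y; x)| ≤ L_p^i ‖y - x‖^{p+1} / (p+1)!`,
so by the Lipschitz continuity of `g`,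
`f(y) + (M - L_g ‖L_p‖) / (p+1)! ‖y - x‖^{p+1} ≤ s_M(y; x)`.
As `s_M(x; x) = f(x)`, each step of a RHOTA sequence decreases `f` by at least
`(M - L_g ‖L_p‖) / (p+1)! ‖x_{k+1} - x_k‖^{p+1}`; telescoping against `f ≥ f^*` bounds the partial
sums, and the smallest of the first `k + 1` terms is at most their average.
-/

open Set Finset Filter Topology
open scoped Nat

/-- Induction on `p`: the remainder `f - T_{p+1} f` has derivative `f' - T_p f'`, so the fencing
theorem turns the bound for `f'` into the bound for `f`. -/
theorem abs_sub_taylorWithinEval_le {p : ℕ} {f : ℝ → ℝ} (hf : ContDiff ℝ p f) {x y L : ℝ}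
    (hxy : x ≤ y)
    (hL : ∀ t ∈ Icc x y, |iteratedDeriv p f t - iteratedDeriv p f x| ≤ L * (t - x)) :
    |f y - taylorWithinEval f p univ x y| ≤ L * (y - x) ^ (p + 1) / (p + 1)! := by
  induction p generalizing f y with
  | zero => simpa using hL y ⟨hxy, le_rfl⟩
  | succ p ih =>
    have hdiff : Differentiable ℝ f := hf.differentiable (by simp)
    have hf' : ContDiff ℝ p (deriv f) := (contDiff_succ_iff_deriv.mp hf).2.2
    have hrem : ∀ t, HasDerivAt (fun s => f s - taylorWithinEval f (p + 1) univ x s)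
        (deriv f t - taylorWithinEval (deriv f) p univ x t) t := fun t => by
      have := (hdiff t).hasDerivAt.sub (hasDerivAt_taylorWithinEval_succ (x₀ := x) (s := univ) f p)
      rwa [derivWithin_univ] at this
    have hbound : ∀ t, HasDerivAt (fun s => L * (s - x) ^ (p + 2) / (p + 2)!)
        (L * (t - x) ^ (p + 1) / (p + 1)!) t := fun t => by
      refine ((((hasDerivAt_id' t).sub_const x).fun_pow (p + 2)).const_mul L).div_const
        ((p + 2)! : ℝ) |>.congr_deriv ?_
      rw [Nat.factorial_succ (p + 1)]
      push_cast
      field_simp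
      ring
    refine image_norm_le_of_norm_deriv_right_le_deriv_boundary
      (fun t _ => (hrem t).continuousAt.continuousWithinAt) (fun t _ => (hrem t).hasDerivWithinAt)
      (by simp) hbound (fun t ht => ?_) ⟨hxy, le_rfl⟩
    refine ih hf' ht.1 fun s hs => ?_
    rw [← iteratedDeriv_succ']
    exact hL s ⟨hs.1, hs.2.trans ht.2.le⟩

section
variable {E : Type*} [NormedAddCommGroup E] [NormedSpace ℝ E]

theorem iteratedDeriv_comp_add_smul {n : WithTop ℕ∞} {f : E → ℝ} (hf : ContDiff ℝ n f)
    {j : ℕ} (hj : j ≤ n) (x d : E) (t : ℝ) :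
    iteratedDeriv j (fun s : ℝ => f (x + s • d)) t =
      iteratedFDeriv ℝ j f (x + t • d) (fun _ => d) := by
  have hcomp : (fun s : ℝ => f (x + s • d)) =
      (fun z => f (x + z)) ∘ ContinuousLinearMap.toSpanSingleton ℝ d := rfl
  have hshift : ContDiff ℝ n (fun z => f (x + z)) := hf.comp (contDiff_const.add contDiff_id)
  rw [iteratedDeriv_eq_iteratedFDeriv, hcomp,
    ContinuousLinearMap.iteratedFDeriv_comp_right _ hshift t hj,
    iteratedFDeriv_comp_add_left]
  simp

theorem abs_sub_taylor_le_of_lipschitz_iteratedFDeriv {p : ℕ} {f : E → ℝ} (hf : ContDiff ℝ p f)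
    {L : ℝ} (hL : ∀ a b, ‖iteratedFDeriv ℝ p f a - iteratedFDeriv ℝ p f b‖ ≤ L * ‖a - b‖)
    (x y : E) :
    |f y - ∑ j ∈ range (p + 1), 1 / (j ! : ℝ) * iteratedFDeriv ℝ j f x (fun _ => y - x)| ≤
      L * ‖y - x‖ ^ (p + 1) / (p + 1)! := by
  set d := y - x
  have hline : ContDiff ℝ p (fun s : ℝ => f (x + s • d)) :=
    hf.comp (contDiff_const.add (contDiff_id.smul contDiff_const))
  have hLline : ∀ t ∈ Icc (0 : ℝ) 1, |iteratedDeriv p (fun s : ℝ => f (x + s • d)) t -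
      iteratedDeriv p (fun s : ℝ => f (x + s • d)) 0| ≤ L * ‖d‖ ^ (p + 1) * (t - 0) := by
    intro t ht
    rw [iteratedDeriv_comp_add_smul hf le_rfl, iteratedDeriv_comp_add_smul hf le_rfl, zero_smul,
      add_zero, ← sub_apply]
    calc _ ≤ ‖iteratedFDeriv ℝ p f (x + t • d) - iteratedFDeriv ℝ p f x‖ * ∏ _ : Fin p, ‖d‖ :=
          ContinuousMultilinearMap.le_opNorm _ _
      _ ≤ L * ‖t • d‖ * ‖d‖ ^ p := by
          rw [prod_const, card_univ, Fintype.card_fin]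
          gcongr
          simpa using hL (x + t • d) x
      _ = L * ‖d‖ ^ (p + 1) * (t - 0) := by
          rw [norm_smul, Real.norm_of_nonneg ht.1]
          ring
  have key := abs_sub_taylorWithinEval_le hline zero_le_one hLline
  have hy : x + (1 : ℝ) • d = y := by simp [d]
  simp only [hy, taylor_within_apply, iteratedDerivWithin_univ] at key
  have hsum : ∑ j ∈ range (p + 1), ((j ! : ℝ)⁻¹ * (1 - 0) ^ j) •
      iteratedDeriv j (fun s : ℝ => f (x + s • d)) 0 =
      ∑ j ∈ range (p + 1), 1 / (j ! : ℝ) * iteratedFDeriv ℝ j f x (fun _ => d) := by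
    refine sum_congr rfl fun j hj => ?_
    rw [iteratedDeriv_comp_add_smul hf (by exact_mod_cast Nat.lt_succ_iff.mp (mem_range.mp hj)),
      zero_smul, add_zero]
    simp
  rw [hsum] at key
  simpa using key
end

theorem EuclideanSpace.norm_le_norm_of_abs_le {ι : Type*} [Fintype ι] {v w : EuclideanSpace ℝ ι}
    (h : ∀ i, |v i| ≤ w i) : ‖v‖ ≤ ‖w‖ := by
  rw [EuclideanSpace.norm_eq, EuclideanSpace.norm_eq]
  gcongr with i
  exact (h i).trans (le_abs_self _)

theorem nonneg_of_abs_sub_le_mul_norm_sub {E : Type*} [NormedAddCommGroup E] [Nontrivial E]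
    {g : E → ℝ} {L : ℝ} (hg : ∀ a b, |g a - g b| ≤ L * ‖a - b‖) : 0 ≤ L := by
  obtain ⟨a, ha⟩ := exists_ne (0 : E)
  have := (abs_nonneg _).trans (hg a 0)
  rw [sub_zero] at this
  exact nonneg_of_mul_nonneg_left this (norm_pos_iff.mpr ha)

theorem Filter.Tendsto.of_pow_nhds_zero {α : Type*} {l : Filter α} {u : α → ℝ} {q : ℕ}
    (hq : q ≠ 0) (hu : ∀ a, 0 ≤ u a) (h : Tendsto (fun a => u a ^ q) l (𝓝 0)) :
    Tendsto u l (𝓝 0) := by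
  have := h.rpow_const (p := (q : ℝ)⁻¹) (Or.inr (by positivity))
  rw [Real.zero_rpow (by positivity)] at this
  simpa only [Real.pow_rpow_inv_natCast (hu _) hq] using this

theorem sum_range_le_div_of_descent {a d : ℕ → ℝ} {c lb : ℝ} (hc : 0 < c)
    (hdes : ∀ k, c * d k ≤ a k - a (k + 1)) (hlb : ∀ k, lb ≤ a k) (K : ℕ) :
    ∑ k ∈ range K, d k ≤ (a 0 - lb) / c := by
  rw [le_div_iff₀' hc, mul_sum]
  calc ∑ k ∈ range K, c * d k ≤ ∑ k ∈ range K, (a k - a (k + 1)) := sum_le_sum fun k _ => hdes k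
    _ = a 0 - a K := sum_range_sub' a K
    _ ≤ a 0 - lb := by linarith [hlb K]

theorem exists_le_div_of_sum_range_le {d : ℕ → ℝ} {S : ℝ} {k : ℕ}
    (h : ∑ i ∈ range (k + 1), d i ≤ S) : ∃ j ≤ k, d j ≤ S / (k + 1) := by
  have hconst : ∑ _i ∈ range (k + 1), S / (k + 1) = S := by
    rw [sum_const, card_range, nsmul_eq_mul]
    field_simp
    push_cast; ring
  obtain ⟨j, hj, hle⟩ := exists_le_of_sum_le nonempty_range_add_one (h.trans hconst.ge)
  exact ⟨j, Nat.lt_succ_iff.mp (mem_range.mp hj), hle⟩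

section
variable {n m p : ℕ} {F : Fin m → EuclideanSpace ℝ (Fin n) → ℝ}
  {g : EuclideanSpace ℝ (Fin m) → ℝ} {h : EuclideanSpace ℝ (Fin n) → ℝ}
  {Lp : EuclideanSpace ℝ (Fin m)}

theorem taylorMap_self (x : EuclideanSpace ℝ (Fin n)) : taylorMap p F x x = euclMap F x := by
  ext i
  simp [taylorMap, euclMap, sum_range_succ', ← Pi.zero_def]

theorem sModel_self {M : ℝ} (x : EuclideanSpace ℝ (Fin n)) :
    sModel p F g h M x x = fObj F g h x := by
  simp [sModel, fObj, taylorMap_self]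

theorem norm_euclMap_sub_taylorMap_le (hFd : ∀ i, ContDiff ℝ p (F i))
    (hFlip : ∀ i (x y : EuclideanSpace ℝ (Fin n)),
      ‖iteratedFDeriv ℝ p (F i) x - iteratedFDeriv ℝ p (F i) y‖ ≤ Lp i * ‖x - y‖)
    (x y : EuclideanSpace ℝ (Fin n)) :
    ‖euclMap F y - taylorMap p F y x‖ ≤ ‖y - x‖ ^ (p + 1) / (p + 1)! * ‖Lp‖ := by
  have hr : 0 ≤ ‖y - x‖ ^ (p + 1) / (p + 1)! := by positivity
  rw [← Real.norm_of_nonneg hr, ← norm_smul]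
  refine EuclideanSpace.norm_le_norm_of_abs_le fun i => ?_
  have := abs_sub_taylor_le_of_lipschitz_iteratedFDeriv (hFd i) (hFlip i) x y
  convert this using 1
  · simp [euclMap, taylorMap]
  · simp only [PiLp.smul_apply, smul_eq_mul]
    ring

theorem fObj_add_le_sModel (hFd : ∀ i, ContDiff ℝ p (F i))
    (hFlip : ∀ i (x y : EuclideanSpace ℝ (Fin n)),
      ‖iteratedFDeriv ℝ p (F i) x - iteratedFDeriv ℝ p (F i) y‖ ≤ Lp i * ‖x - y‖)
    {Lg : ℝ} (hLg : 0 ≤ Lg) (hglip : ∀ a b, |g a - g b| ≤ Lg * ‖a - b‖)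
    (M : ℝ) (x y : EuclideanSpace ℝ (Fin n)) :
    fObj F g h y + (M - Lg * ‖Lp‖) / (p + 1)! * ‖y - x‖ ^ (p + 1) ≤ sModel p F g h M y x := by
  have hg := (le_abs_self _).trans (hglip (euclMap F y) (taylorMap p F y x))
  have hT := mul_le_mul_of_nonneg_left (norm_euclMap_sub_taylorMap_le hFd hFlip x y) hLg
  have hsplit : (M - Lg * ‖Lp‖) / (p + 1)! * ‖y - x‖ ^ (p + 1) =
      M / (p + 1)! * ‖y - x‖ ^ (p + 1) - Lg * (‖y - x‖ ^ (p + 1) / (p + 1)! * ‖Lp‖) := by ring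
  simp only [fObj, sModel, hsplit]
  linarith

end

theorem stmt2_general {n m : ℕ} (hm : 1 ≤ m) (p : ℕ)
    (F : Fin m → EuclideanSpace ℝ (Fin n) → ℝ)
    (Lp : EuclideanSpace ℝ (Fin m))
    (hFd : ∀ i, ContDiff ℝ p (F i))
    (hFlip : ∀ i (x y : EuclideanSpace ℝ (Fin n)),
      ‖iteratedFDeriv ℝ p (F i) x - iteratedFDeriv ℝ p (F i) y‖ ≤ Lp i * ‖x - y‖)
    (g : EuclideanSpace ℝ (Fin m) → ℝ) (Lg : ℝ)
    (hglip : ∀ a b : EuclideanSpace ℝ (Fin m), |g a - g b| ≤ Lg * ‖a - b‖)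
    (C : Set (EuclideanSpace ℝ (Fin n)))
    (h : EuclideanSpace ℝ (Fin n) → ℝ)
    (fstar : ℝ) (hlb : ∀ x ∈ C, fstar ≤ fObj F g h x)
    (M : ℝ) (hM : Lg * ‖Lp‖ < M)
    (x : ℕ → EuclideanSpace ℝ (Fin n)) (hxC : ∀ k, x k ∈ C)
    (hdes : ∀ k, sModel p F g h M (x (k + 1)) (x k) ≤ sModel p F g h M (x k) (x k)) :
    Summable (fun k => ‖x (k + 1) - x k‖ ^ (p + 1)) ∧
    (∑' k : ℕ, ‖x (k + 1) - x k‖ ^ (p + 1)) ≤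
      (Nat.factorial (p + 1) : ℝ) * (fObj F g h (x 0) - fstar) / (M - Lg * ‖Lp‖) ∧
    Filter.Tendsto (fun k => ‖x (k + 1) - x k‖) Filter.atTop (nhds 0) ∧
    ∀ k : ℕ, ∃ j ≤ k, ‖x (j + 1) - x j‖ ^ (p + 1) ≤
      (fObj F g h (x 0) - fstar) * (Nat.factorial (p + 1) : ℝ) /
        ((M - Lg * ‖Lp‖) * (k + 1)) := by
  have : Nonempty (Fin m) := ⟨⟨0, hm⟩⟩
  have hLg : 0 ≤ Lg := nonneg_of_abs_sub_le_mul_norm_sub hglip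
  have hgap : 0 < M - Lg * ‖Lp‖ := sub_pos.mpr hM
  set c : ℝ := (M - Lg * ‖Lp‖) / (p + 1)!
  have hc : 0 < c := by positivity
  have hstep (k : ℕ) :
      c * ‖x (k + 1) - x k‖ ^ (p + 1) ≤ fObj F g h (x k) - fObj F g h (x (k + 1)) := by
    have hmodel := fObj_add_le_sModel (h := h) hFd hFlip hLg hglip M (x k) (x (k + 1))
    have hdesk := hdes k
    rw [sModel_self] at hdesk
    linarith
  have hpartial := sum_range_le_div_of_descent hc hstep fun k => hlb _ (hxC k)
  have hsummable := summable_of_sum_range_le (fun _ => by positivity) hpartial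
  have hlimit : (fObj F g h (x 0) - fstar) / c =
      (p + 1)! * (fObj F g h (x 0) - fstar) / (M - Lg * ‖Lp‖) := by
    simp only [c]
    field_simp
  refine ⟨hsummable, hlimit ▸ Real.tsum_le_of_sum_range_le (fun _ => by positivity) hpartial,
    hsummable.tendsto_atTop_zero.of_pow_nhds_zero p.succ_ne_zero fun _ => norm_nonneg _,
    fun k => ?_⟩
  obtain ⟨j, hj, hle⟩ := exists_le_div_of_sum_range_le (hpartial (k + 1))
  refine ⟨j, hj, hle.trans_eq ?_⟩
  simp only [c]
  field_simp

/-- summability of the step sizes, convergence of steps to zero,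
and the `O(1/k)` rate for the minimal step along a RHOTA sequence. -/
theorem stmt2 {n m : ℕ} (hn : 1 ≤ n) (hm : 1 ≤ m) (p : ℕ) (hp : 1 ≤ p)
    (F : Fin m → EuclideanSpace ℝ (Fin n) → ℝ)
    (Lp : EuclideanSpace ℝ (Fin m))
    (hFd : ∀ i, ContDiff ℝ p (F i))
    (hFlip : ∀ i (x y : EuclideanSpace ℝ (Fin n)),
      ‖iteratedFDeriv ℝ p (F i) x - iteratedFDeriv ℝ p (F i) y‖ ≤ Lp i * ‖x - y‖)
    (g : EuclideanSpace ℝ (Fin m) → ℝ) (Lg : ℝ)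
    (hgconv : ConvexOn ℝ Set.univ g)
    (hglip : ∀ a b : EuclideanSpace ℝ (Fin m), |g a - g b| ≤ Lg * ‖a - b‖)
    (C : Set (EuclideanSpace ℝ (Fin n))) (hCne : C.Nonempty) (hCcl : IsClosed C)
    (hCcv : Convex ℝ C)
    (h : EuclideanSpace ℝ (Fin n) → ℝ) (hhconv : ConvexOn ℝ Set.univ h)
    (hhlsc : LowerSemicontinuous h)
    (fstar : ℝ) (hlb : ∀ x ∈ C, fstar ≤ fObj F g h x)
    (M : ℝ) (hM : Lg * ‖Lp‖ < M)
    (x : ℕ → EuclideanSpace ℝ (Fin n)) (hxC : ∀ k, x k ∈ C)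
    (hdes : ∀ k, sModel p F g h M (x (k + 1)) (x k) ≤ sModel p F g h M (x k) (x k)) :
    Summable (fun k => ‖x (k + 1) - x k‖ ^ (p + 1)) ∧
    (∑' k : ℕ, ‖x (k + 1) - x k‖ ^ (p + 1)) ≤
      (Nat.factorial (p + 1) : ℝ) * (fObj F g h (x 0) - fstar) / (M - Lg * ‖Lp‖) ∧
    Filter.Tendsto (fun k => ‖x (k + 1) - x k‖) Filter.atTop (nhds 0) ∧
    ∀ k : ℕ, ∃ j ≤ k, ‖x (j + 1) - x j‖ ^ (p + 1) ≤
      (fObj F g h (x 0) - fstar) * (Nat.factorial (p + 1) : ℝ) /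
        ((M - Lg * ‖Lp‖) * (k + 1)) :=
  stmt2_general hm p F Lp hFd hFlip g Lg hglip C h fstar hlb M hM x hxC hdes

end
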